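/- arXiv:2006.16674 — 5 statements merged into one kernel-verified Lean document; each statement's English description precedes it below -/
import Mathlib

section
/- Let b be a positive rational and m ≥ 2 such that b^(1/m) is a reduced irrational. Then the minimal polynomial of b^(1/m) over ℚ is X^m − b; in particular, [ℚ(b^(1/m)) : ℚ] = m. -/
open Polynomial IntermediateField

def IsReducedIrrational (b : ℚ) (m : ℕ) : Prop :=
  0 < b ∧ 2 ≤ m ∧ Irrational ((b : ℝ) ^ ((1 : ℝ) / m)) ∧
    ∀ e d : ℚ, 0 < e → 0 < d → ∀ n : ℕ, n < m →
      (b : ℝ) ^ ((1 : ℝ) / m) ≠ (e : ℝ) * (d : ℝ) ^ ((1 : ℝ) / n)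

/-!
Let `α = b^(1/m)` and `q` its minimal polynomial, of degree `n`. Since `q ∣ X^m - b`, every complex
root of `q` has modulus `α`, so `|q(0)| = α^n` and `α^n` is rational. As `α^m = b` is rational as
well, Bézout makes `α^gcd(n, m)` rational, i.e. `α` is a `gcd(n, m)`-th root of a rational number.
Reducedness then forces `gcd(n, m) = m`, so `n = m` and the monic divisor `q` is `X^m - b`.
-/

theorem pow_gcd_mem {K S : Type*} [DivisionRing K] [SetLike S K] [SubfieldClass S K] {s : S}
    {x : K} {n m : ℕ} (hn : x ^ n ∈ s) (hm : x ^ m ∈ s) : x ^ n.gcd m ∈ s := by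
  rcases eq_or_ne x 0 with rfl | hx
  · rw [zero_pow_eq]
    split_ifs
    exacts [one_mem s, zero_mem s]
  · have hbezout : x ^ n.gcd m = (x ^ n) ^ n.gcdA m * (x ^ m) ^ n.gcdB m := by
      rw [← zpow_natCast, Nat.gcd_eq_gcd_ab, zpow_add₀ hx, zpow_mul, zpow_mul, zpow_natCast,
        zpow_natCast]
    rw [hbezout]
    exact mul_mem (zpow_mem hn _) (zpow_mem hm _)

namespace Polynomial

theorem Monic.norm_coeff_zero_of_forall_mem_roots {K : Type*} [NormedField K] {f : K[X]}
    (hf : f.Monic) (hsplit : f.Splits) {r : ℝ} (hroots : ∀ z ∈ f.roots, ‖z‖ = r) :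
    ‖f.coeff 0‖ = r ^ f.natDegree := by
  have hnorms : f.roots.map norm = Multiset.replicate f.natDegree r := by
    rw [Multiset.eq_replicate, Multiset.card_map, hsplit.natDegree_eq_card_roots]
    exact ⟨rfl, Multiset.forall_mem_map_iff.2 hroots⟩
  rw [hsplit.coeff_zero_eq_prod_roots_of_monic hf, norm_mul, norm_pow, norm_neg, norm_one, one_pow,
    one_mul, ← Multiset.prod_replicate, ← hnorms]
  exact map_multiset_prod normHom f.roots

theorem pow_natDegree_eq_abs_coeff_zero_of_dvd_X_pow_sub_C {α : ℝ} (hα : 0 ≤ α) {b : ℚ} {m : ℕ}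
    (hm : m ≠ 0) (hαm : α ^ m = b) {q : ℚ[X]} (hq : q.Monic) (hdvd : q ∣ X ^ m - C b) :
    α ^ q.natDegree = |q.coeff 0| := by
  set f := q.map (algebraMap ℚ ℂ)
  have hroots : ∀ z ∈ f.roots, ‖z‖ = α := by
    intro z hz
    have hzq : aeval z q = 0 := by
      rwa [mem_roots (hq.map _).ne_zero, IsRoot, eval_map_algebraMap] at hz
    have hzm : z ^ m = (b : ℂ) := by
      simpa [sub_eq_zero] using aeval_eq_zero_of_dvd_aeval_eq_zero hdvd hzq
    have hnorm : ‖z‖ ^ m = α ^ m := by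
      rw [← norm_pow, hzm, hαm, ← Complex.ofReal_ratCast, Complex.norm_real, Real.norm_eq_abs,
        abs_of_nonneg (hαm ▸ pow_nonneg hα m)]
    exact (pow_left_inj₀ (norm_nonneg z) hα hm).1 hnorm
  have h := (hq.map (algebraMap ℚ ℂ)).norm_coeff_zero_of_forall_mem_roots (IsAlgClosed.splits f)
    hroots
  rwa [coeff_map, hq.natDegree_map, eq_ratCast, ← Complex.ofReal_ratCast, Complex.norm_real,
    Real.norm_eq_abs, ← Rat.cast_abs, eq_comm] at h

end Polynomial

theorem IsReducedIrrational.le_of_pow_eq_ratCast {b : ℚ} {m : ℕ} (h : IsReducedIrrational b m)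
    {d : ℕ} (hd : d ≠ 0) {c : ℚ} (hc : ((b : ℝ) ^ ((1 : ℝ) / m)) ^ d = c) : m ≤ d := by
  obtain ⟨hb, -, -, hmin⟩ := h
  have hα : 0 < (b : ℝ) ^ ((1 : ℝ) / m) := by positivity
  have hcpos : 0 < c := by exact_mod_cast hc ▸ pow_pos hα d
  by_contra! hdm
  refine hmin 1 c one_pos hcpos d hdm ?_
  rw [Rat.cast_one, one_mul, ← hc, one_div (d : ℝ), Real.pow_rpow_inv_natCast hα.le hd]

theorem minpoly_of_reduced_irrational (b : ℚ) (m : ℕ)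
    (hred : IsReducedIrrational b m) :
    minpoly ℚ ((b : ℝ) ^ ((1 : ℝ) / m)) = X ^ m - C b ∧
    Module.finrank ℚ ℚ⟮(b : ℝ) ^ ((1 : ℝ) / m)⟯ = m := by
  set α := (b : ℝ) ^ ((1 : ℝ) / m)
  have hm : m ≠ 0 := by linarith [hred.2.1]
  have hb : (0 : ℝ) ≤ b := Rat.cast_nonneg.2 hred.1.le
  have hα : 0 ≤ α := Real.rpow_nonneg hb _
  have hαm : α ^ m = b := by simpa only [α, one_div] using Real.rpow_inv_natCast_pow hb hm
  have haeval : aeval α (X ^ m - C b) = 0 := by simp [hαm]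
  have hint : IsIntegral ℚ α := ⟨_, monic_X_pow_sub_C b hm, haeval⟩
  set q := minpoly ℚ α
  have hdvd : q ∣ X ^ m - C b := minpoly.dvd ℚ α haeval
  have hαq : α ^ q.natDegree = |q.coeff 0| :=
    pow_natDegree_eq_abs_coeff_zero_of_dvd_X_pow_sub_C hα hm hαm (minpoly.monic hint) hdvd
  obtain ⟨c, hc⟩ : α ^ q.natDegree.gcd m ∈ (⊥ : IntermediateField ℚ ℝ) :=
    pow_gcd_mem (mem_bot.2 ⟨_, hαq.symm⟩) (mem_bot.2 ⟨_, hαm.symm⟩)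
  have hdeg : m ≤ q.natDegree :=
    (hred.le_of_pow_eq_ratCast (Nat.gcd_ne_zero_right hm) hc.symm).trans
      (Nat.gcd_le_left _ (minpoly.natDegree_pos hint))
  have hq : q = X ^ m - C b := (eq_of_monic_of_dvd_of_natDegree_le (minpoly.monic hint)
    (monic_X_pow_sub_C b hm) hdvd (by rwa [natDegree_X_pow_sub_C])).symm
  exact ⟨hq, (adjoin.finrank hint).trans ((congrArg natDegree hq).trans natDegree_X_pow_sub_C)⟩
end

section
/- Let p be a prime and a, m positive integers with gcd(a, m) = 1 and m ≥ 2. Then p^(a/m) (the positive real m-th root of p^a) is irrational and cannot be written as e·d^(1/n) for positive rationals e, d and n < m; that is, p^(a/m) is a reduced irrational. -/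
/-!
Let `x = p ^ (a / m)`, so `x ^ m = p ^ a`. If `x ^ j` is rational, then by Bézout so is `x ^ g` for
`g = gcd j m`, and it is a rational `(m / g)`-th root of `p ^ a`; comparing `p`-adic valuations
gives `m / g ∣ a`, so `gcd a m = 1` forces `g = m`, i.e. `m ∣ j`. But `x = e * d ^ (1 / n)` would
make `x ^ n = e ^ n * d` rational with `0 < n < m`.
-/

theorem Rat.dvd_of_pow_eq_prime_pow {p k a : ℕ} (hp : p.Prime) {r : ℚ}
    (h : r ^ k = (p : ℚ) ^ a) : k ∣ a := by
  have : Fact p.Prime := ⟨hp⟩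
  have hval : (k : ℤ) * padicValRat p r = a := by
    rw [← padicValRat.pow, h, padicValRat.pow, padicValRat.self hp.one_lt, mul_one]
  exact Int.ofNat_dvd.mp ⟨padicValRat p r, hval.symm⟩

theorem exists_rat_pow_gcd_eq {K : Type*} [Field K] [CharZero K] {x : K} (hx : x ≠ 0)
    {n m : ℕ} {s t : ℚ} (hn : x ^ n = (s : K)) (hm : x ^ m = (t : K)) :
    ∃ r : ℚ, x ^ Nat.gcd n m = (r : K) := by
  refine ⟨s ^ Nat.gcdA n m * t ^ Nat.gcdB n m, ?_⟩
  rw [← zpow_natCast, Nat.gcd_eq_gcd_ab, zpow_add₀ hx, zpow_mul, zpow_mul, zpow_natCast,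
    zpow_natCast, hn, hm]
  push_cast
  rfl

theorem dvd_of_pow_eq_rat_of_pow_eq_prime_pow {K : Type*} [Field K] [CharZero K] {p a m : ℕ}
    (hp : p.Prime) (hgcd : Nat.gcd a m = 1) {x : K} (hx : x ≠ 0)
    (hxm : x ^ m = (p : K) ^ a) {j : ℕ} {r : ℚ} (hj : x ^ j = (r : K)) : m ∣ j := by
  set g := Nat.gcd j m
  obtain ⟨s, hs⟩ := exists_rat_pow_gcd_eq hx hj (t := (p : ℚ) ^ a) (by push_cast; exact hxm)
  have hgm : g * (m / g) = m := Nat.mul_div_cancel' (Nat.gcd_dvd_right j m)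
  have hroot : s ^ (m / g) = (p : ℚ) ^ a := by
    apply Rat.cast_injective (α := K)
    push_cast
    rw [← hs, ← pow_mul, hgm, hxm]
  have hdiv_a : m / g ∣ a := Rat.dvd_of_pow_eq_prime_pow hp hroot
  have hdiv_one : m / g = 1 :=
    Nat.eq_one_of_dvd_one (hgcd ▸ Nat.dvd_gcd hdiv_a (Nat.div_dvd_of_dvd (Nat.gcd_dvd_right j m)))
  rw [hdiv_one, mul_one] at hgm
  exact hgm ▸ Nat.gcd_dvd_left j m

theorem prime_power_root_reduced_general (p a m : ℕ) (hp : p.Prime)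
    (hgcd : Nat.gcd a m = 1) (hm : 2 ≤ m) :
    Irrational ((p : ℝ) ^ ((a : ℝ) / (m : ℝ))) ∧
    ∀ e d : ℚ, 0 < e → 0 < d → ∀ n : ℕ, n < m →
      (p : ℝ) ^ ((a : ℝ) / (m : ℝ)) ≠ (e : ℝ) * (d : ℝ) ^ ((1 : ℝ) / n) := by
  set x : ℝ := (p : ℝ) ^ ((a : ℝ) / (m : ℝ))
  have hp0 : (0 : ℝ) ≤ p := Nat.cast_nonneg p
  have hx : x ≠ 0 := (Real.rpow_pos_of_pos (by exact_mod_cast hp.pos) _).ne'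
  have hxm : x ^ m = (p : ℝ) ^ a := by
    rw [← Real.rpow_mul_natCast hp0, div_mul_cancel₀ _ (by positivity), Real.rpow_natCast]
  have hdvd {j : ℕ} {r : ℚ} : x ^ j = (r : ℝ) → m ∣ j :=
    dvd_of_pow_eq_rat_of_pow_eq_prime_pow hp hgcd hx hxm
  have hirr : Irrational x := by
    rintro ⟨r, hr⟩
    have := Nat.le_of_dvd one_pos (hdvd (j := 1) (by rw [pow_one, hr]))
    omega
  refine ⟨hirr, fun e d _ hd n hn heq => ?_⟩
  rcases Nat.eq_zero_or_pos n with rfl | hn0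
  · exact hirr ⟨e, by simpa using heq.symm⟩
  have hxn : x ^ n = ((e ^ n * d : ℚ) : ℝ) := by
    rw [heq, mul_pow, one_div, Real.rpow_inv_natCast_pow (by positivity) hn0.ne']
    push_cast
    rfl
  have := Nat.le_of_dvd hn0 (hdvd hxn)
  omega

theorem prime_power_root_reduced (p a m : ℕ) (hp : p.Prime) (ha : 0 < a)
    (hgcd : Nat.gcd a m = 1) (hm : 2 ≤ m) :
    Irrational ((p : ℝ) ^ ((a : ℝ) / (m : ℝ))) ∧
    ∀ e d : ℚ, 0 < e → 0 < d → ∀ n : ℕ, n < m →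
      (p : ℝ) ^ ((a : ℝ) / (m : ℝ)) ≠ (e : ℝ) * (d : ℝ) ^ ((1 : ℝ) / n) :=
  prime_power_root_reduced_general p a m hp hgcd hm
end

section
/- Let q₁, …, q_t be distinct primes and η₁, …, η_t ≥ 2. The set of products {∏_{k=1}^t q_k^(ε_k/η_k) : 0 ≤ ε_k ≤ η_k − 1} is linearly independent over ℚ (as real numbers); in particular it is a ℚ-basis of ℚ(q₁^(1/η₁), …, q_t^(1/η_t)). -/
/-!
Write `g k = q k ^ (1 / η k)`. The products `v ε` are the monomials `∏ k, g k ^ ε k` with reduced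
exponents, and since `g k ^ η k = q k` every monomial in the `g k` is a rational multiple of one
of them; so they span the algebra generated by the `g k`, which is the field `ℚ(g)`.

For linear independence, divide a relation `∑ a_ε v_ε = 0` by `v_δ` and take the trace of
`ℚ(g)/ℚ`. For `ε ≠ δ` the quotient `u = v_ε / v_δ` is a positive real with a rational power, but
comparing `q k`-adic valuations shows that `u` itself is irrational. If `d` is least with
`u ^ d = c ∈ ℚ`, then `c > 0` is not an `ℓ`-th power for any prime `ℓ ∣ d`, so `X ^ d - c` is
irreducible; it is the minimal polynomial of `u`, and as it has no `X ^ (d - 1)` term, `u` has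
trace zero. Only the term `ε = δ` survives: `a_δ [ℚ(g) : ℚ] = 0`.
-/

open Polynomial IntermediateField

theorem Polynomial.nextCoeff_X_pow_sub_C {R : Type*} [Ring R] [Nontrivial R] {d : ℕ}
    (hd : 2 ≤ d) (c : R) : (X ^ d - C c).nextCoeff = 0 := by
  rw [nextCoeff_of_natDegree_pos (by rw [natDegree_X_pow_sub_C]; omega), natDegree_X_pow_sub_C,
    coeff_sub, coeff_X_pow, coeff_C, if_neg (by omega), if_neg (by omega), sub_zero]

theorem Algebra.trace_eq_zero_of_minpoly_eq_X_pow_sub_C {K L : Type*} [Field K] [Field L]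
    [Algebra K L] [FiniteDimensional K L] {x : L} {d : ℕ} (hd : 2 ≤ d) {c : K}
    (hx : minpoly K x = X ^ d - C c) : Algebra.trace K L x = 0 := by
  rw [trace_eq_finrank_mul_minpoly_nextCoeff, hx, nextCoeff_X_pow_sub_C hd, neg_zero, mul_zero]

theorem X_pow_sub_C_irreducible_of_pos {K : Type*} [Field K] [LinearOrder K]
    [IsStrictOrderedRing K] {d : ℕ} (hd : d ≠ 0) {c : K} (hc : 0 < c)
    (H : ∀ ℓ : ℕ, ℓ.Prime → ℓ ∣ d → ∀ b : K, b ^ ℓ ≠ c) :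
    Irreducible (X ^ d - C c) := by
  induction d using induction_on_primes with
  | zero => exact absurd rfl hd
  | one => simpa using irreducible_X_sub_C c
  | prime_mul p a hp IH =>
    have ha : a ≠ 0 := right_ne_zero_of_mul hd
    apply X_pow_mul_sub_C_irreducible (IH ha fun ℓ hℓ hdvd ↦ H ℓ hℓ (hdvd.mul_left p))
    intro E _ _ x hx
    have hint : IsIntegral K x := not_not.mp fun h ↦ by
      simpa only [degree_zero, degree_X_pow_sub_C (Nat.pos_of_ne_zero ha),
        WithBot.natCast_ne_bot] using congr_arg degree (hx.symm.trans (dif_neg h))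
    refine X_pow_sub_C_irreducible_of_prime hp fun b hb ↦ H p hp (dvd_mul_right p a)
      |Algebra.norm K b| ?_
    -- The norm of the generator is `±c`, so taking norms in `b ^ p = x` makes `c` a `p`-th power.
    have hnorm : Algebra.norm K b ^ p = (-1) ^ a * -c := by
      rw [← map_pow, hb, ← adjoin.powerBasis_gen hint,
        Algebra.PowerBasis.norm_gen_eq_coeff_zero_minpoly]
      simp [minpoly_gen, hx, Ne.symm ha]
    rw [pow_abs, hnorm, abs_mul, abs_pow, abs_neg, abs_one, one_pow, one_mul, abs_neg,
      abs_of_pos hc]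

theorem minpoly_eq_X_pow_sub_C_of_pos {F : Type*} [Field F] [LinearOrder F]
    [IsStrictOrderedRing F] {u : F} (hu : 0 < u) {d : ℕ} (hd : 0 < d) {c : ℚ}
    (hud : u ^ d = c) (hmin : ∀ e, 0 < e → e < d → ∀ s : ℚ, u ^ e ≠ s) :
    minpoly ℚ u = X ^ d - C c := by
  have hc : 0 < c := Rat.cast_pos.mp (hud ▸ pow_pos hu d)
  refine (minpoly.eq_of_irreducible_of_monic ?_ (by simp [hud]) (monic_X_pow_sub_C c hd.ne')).symm
  refine X_pow_sub_C_irreducible_of_pos hd.ne' hc ?_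
  rintro ℓ hℓ ⟨e, rfl⟩ b hb
  have he : 0 < e := Nat.pos_of_mul_pos_left hd
  refine hmin e he (lt_mul_left he hℓ.one_lt) |b| ?_
  rw [← pow_left_inj₀ (pow_pos hu e).le (by positivity) hℓ.ne_zero, ← pow_mul, mul_comm, hud,
    ← Rat.cast_pow, pow_abs, hb, abs_of_pos hc]

theorem trace_eq_zero_of_pow_eq_rat {F : Type*} [Field F] [LinearOrder F]
    [IsStrictOrderedRing F] {L : IntermediateField ℚ F} [FiniteDimensional ℚ L] {u : L}
    (hu : 0 < (u : F)) {N : ℕ} (hN : 0 < N) {s : ℚ} (hs : (u : F) ^ N = s)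
    (hirr : ∀ r : ℚ, (u : F) ≠ r) :
    Algebra.trace ℚ L u = 0 := by
  classical
  have hP : ∃ d, 0 < d ∧ ∃ c : ℚ, (u : F) ^ d = c := ⟨N, hN, s, hs⟩
  obtain ⟨hd, c, hc⟩ := Nat.find_spec hP
  have hd2 : 2 ≤ Nat.find hP := by
    by_contra h
    have h1 : Nat.find hP = 1 := by omega
    exact hirr c (by rwa [h1, pow_one] at hc)
  refine Algebra.trace_eq_zero_of_minpoly_eq_X_pow_sub_C hd2 (c := c) ?_
  rw [← minpoly.algebraMap_eq (algebraMap L F).injective]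
  exact minpoly_eq_X_pow_sub_C_of_pos hu hd hc fun e he hlt r hr ↦ Nat.find_min hP hlt ⟨he, r, hr⟩

theorem linearIndependent_of_trace_div_eq_zero {K L ι : Type*} [Field K] [CharZero K] [Field L]
    [Algebra K L] [FiniteDimensional K L] {v : ι → L} (hv : ∀ i, v i ≠ 0)
    (htr : ∀ i j, i ≠ j → Algebra.trace K L (v i / v j) = 0) : LinearIndependent K v := by
  rw [linearIndependent_iff']
  intro s g hg i hi
  have h := congrArg (fun x ↦ Algebra.trace K L (x / v i)) hg
  simp only [Finset.sum_div, smul_div_assoc, map_sum, map_smul, zero_div, map_zero] at h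
  rw [Finset.sum_eq_single i (fun j _ hji ↦ by rw [htr j i hji, smul_zero]) (absurd hi),
    div_self (hv i), ← map_one (algebraMap K L), Algebra.trace_algebraMap, smul_eq_zero] at h
  exact h.resolve_right (by simp [Module.finrank_pos.ne'])

theorem linearIndependent_of_pow_eq_rat_of_div_ne_rat {F ι : Type*} [Field F] [LinearOrder F]
    [IsStrictOrderedRing F] [Finite ι] {v : ι → F} (hpos : ∀ i, 0 < v i)
    (hpow : ∀ i, ∃ n, 0 < n ∧ ∃ s : ℚ, v i ^ n = s)
    (hirr : ∀ i j, i ≠ j → ∀ r : ℚ, v i / v j ≠ r) :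
    LinearIndependent ℚ v := by
  choose n hn s hs using hpow
  let L := IntermediateField.adjoin ℚ (Set.range v)
  have : FiniteDimensional ℚ L := by
    refine finiteDimensional_adjoin ?_
    rintro _ ⟨i, rfl⟩
    exact .of_pow (hn i) (hs i ▸ isIntegral_algebraMap)
  let V : ι → L := fun i ↦ ⟨v i, subset_adjoin _ _ ⟨i, rfl⟩⟩
  refine LinearIndependent.map' (f := L.val.toLinearMap) (v := V) ?_
    (LinearMap.ker_eq_bot.mpr L.val.injective)
  refine linearIndependent_of_trace_div_eq_zero (fun i ↦ ?_) fun i j hij ↦ ?_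
  · exact Subtype.coe_ne_coe.mp (hpos i).ne'
  · refine trace_eq_zero_of_pow_eq_rat (N := n i * n j) (s := s i ^ n j / s j ^ n i)
      (div_pos (hpos i) (hpos j)) (Nat.mul_pos (hn i) (hn j)) ?_ (hirr i j hij)
    simp only [IntermediateField.coe_div, div_pow, Rat.cast_div, Rat.cast_pow, ← hs]
    rw [← pow_mul, ← pow_mul, mul_comm (n j)]

section Monomials

variable {R A ι : Type*} [CommSemiring R] [CommSemiring A] [Algebra R A] [Fintype ι]
  {g : ι → A} {η : ι → ℕ} {c : ι → R}

theorem prod_pow_mem_span_range_prod_pow (hη : ∀ k, η k ≠ 0)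
    (hg : ∀ k, g k ^ η k = algebraMap R A (c k)) (n : ι → ℕ) :
    ∏ k, g k ^ n k ∈ Submodule.span R
      (Set.range fun ε : (k : ι) → Fin (η k) ↦ ∏ k, g k ^ (ε k : ℕ)) := by
  have hred : ∏ k, g k ^ n k = (∏ k, c k ^ (n k / η k)) • ∏ k, g k ^ (n k % η k) := by
    rw [Algebra.smul_def, map_prod, ← Finset.prod_mul_distrib]
    refine Finset.prod_congr rfl fun k _ ↦ ?_
    rw [map_pow, ← hg, ← pow_mul, ← pow_add, Nat.div_add_mod]
  rw [hred]
  exact Submodule.smul_mem _ _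
    (Submodule.subset_span ⟨fun k ↦ ⟨n k % η k, Nat.mod_lt _ (Nat.pos_of_ne_zero (hη k))⟩, rfl⟩)

theorem span_range_prod_pow_eq_adjoin (hη : ∀ k, η k ≠ 0)
    (hg : ∀ k, g k ^ η k = algebraMap R A (c k)) :
    Submodule.span R (Set.range fun ε : (k : ι) → Fin (η k) ↦ ∏ k, g k ^ (ε k : ℕ)) =
      Subalgebra.toSubmodule (Algebra.adjoin R (Set.range g)) := by
  rw [Algebra.adjoin_eq_span]
  refine le_antisymm (Submodule.span_mono ?_) (Submodule.span_le.mpr ?_)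
  · rintro _ ⟨ε, rfl⟩
    exact Submonoid.mem_closure_range_iff_of_fintype.mpr ⟨_, rfl⟩
  · intro x hx
    obtain ⟨n, rfl⟩ := Submonoid.mem_closure_range_iff_of_fintype.mp hx
    exact prod_pow_mem_span_range_prod_pow hη hg n

end Monomials

section PrimeRoots

variable {ι : Type*} [Fintype ι] {q η : ι → ℕ}

theorem padicValRat_prod_pow (hq : ∀ k, (q k).Prime) (hinj : Function.Injective q)
    (a : ι → ℕ) (j : ι) : padicValRat (q j) (∏ k, (q k : ℚ) ^ a k) = a j := by
  have hcast : ∏ k, (q k : ℚ) ^ a k = ((∏ k, q k ^ a k : ℕ) : ℚ) := by push_cast; rfl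
  rw [hcast, padicValRat.of_nat, ← Nat.factorization_def _ (hq j),
    Nat.factorization_prod fun k _ ↦ pow_ne_zero _ (hq k).ne_zero, Finset.sum_apply',
    Finset.sum_eq_single j (fun k _ hkj ↦ ?_) (absurd (Finset.mem_univ j)),
    (hq j).factorization_pow, Finsupp.single_eq_same]
  rw [(hq k).factorization_pow, Finsupp.single_eq_of_ne' (hinj.ne hkj)]

theorem prod_rpow_div_pow_prod (hη : ∀ k, η k ≠ 0) (e : ι → ℕ) :
    (∏ k, (q k : ℝ) ^ ((e k : ℝ) / η k)) ^ (∏ k, η k) =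
      ((∏ k, (q k : ℚ) ^ ((∏ i, η i) / η k * e k) : ℚ) : ℝ) := by
  push_cast
  rw [← Finset.prod_pow]
  refine Finset.prod_congr rfl fun k _ ↦ ?_
  obtain ⟨m, hm⟩ := Finset.dvd_prod_of_mem η (Finset.mem_univ k)
  rw [hm, Nat.mul_div_cancel_left m (Nat.pos_of_ne_zero (hη k)), ← Real.rpow_natCast,
    ← Real.rpow_natCast, ← Real.rpow_mul (Nat.cast_nonneg _)]
  congr 1
  push_cast
  field_simp [hη k]

theorem eq_of_prod_rpow_div_eq_rat_mul (hq : ∀ k, (q k).Prime) (hinj : Function.Injective q)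
    (hη : ∀ k, η k ≠ 0) {ε ε' : (k : ι) → Fin (η k)} {s : ℚ}
    (h : ∏ k, (q k : ℝ) ^ ((ε k : ℝ) / η k) = s * ∏ k, (q k : ℝ) ^ ((ε' k : ℝ) / η k)) :
    ε = ε' := by
  set N := ∏ k, η k
  have hN : N ≠ 0 := Finset.prod_ne_zero_iff.mpr fun k _ ↦ hη k
  have hprod_ne : ∀ e : ι → ℕ, ∏ k, (q k : ℚ) ^ (N / η k * e k) ≠ 0 := fun e ↦
    Finset.prod_ne_zero_iff.mpr fun k _ ↦ pow_ne_zero _ (Nat.cast_ne_zero.mpr (hq k).ne_zero)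
  have hQ : ∏ k, (q k : ℚ) ^ (N / η k * ε k) = s ^ N * ∏ k, (q k : ℚ) ^ (N / η k * ε' k) := by
    have := prod_rpow_div_pow_prod (q := q) hη (fun k ↦ ε k)
    rw [h, mul_pow, prod_rpow_div_pow_prod hη] at this
    exact_mod_cast this.symm
  have hs : s ≠ 0 := by
    rintro rfl
    rw [zero_pow hN, zero_mul] at hQ
    exact hprod_ne _ hQ
  funext j
  have hval := congrArg (padicValRat (q j)) hQ
  have := Fact.mk (hq j)
  rw [padicValRat.mul (pow_ne_zero _ hs) (hprod_ne _), padicValRat.pow,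
    padicValRat_prod_pow hq hinj, padicValRat_prod_pow hq hinj] at hval
  -- The `q j`-adic valuations of the `N`-th powers give `ε j ≡ ε' j` modulo `η j`.
  obtain ⟨M, hM⟩ : η j ∣ N := Finset.dvd_prod_of_mem η (Finset.mem_univ j)
  have hM0 : M ≠ 0 := right_ne_zero_of_mul (hM ▸ hN)
  rw [hM, Nat.mul_div_cancel_left M (Nat.pos_of_ne_zero (hη j))] at hval
  push_cast at hval
  have hdiff : ((ε j : ℕ) : ℤ) - (ε' j : ℕ) = η j * padicValRat (q j) s :=
    mul_left_cancel₀ (Nat.cast_ne_zero.mpr hM0) (by linear_combination hval)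
  have hmod : (ε' j : ℕ) ≡ ε j [MOD η j] := Nat.modEq_iff_dvd.mpr ⟨_, hdiff⟩
  exact Fin.ext (hmod.symm.eq_of_lt_of_lt (ε j).isLt (ε' j).isLt)

end PrimeRoots

theorem prime_root_products_linearIndependent (t : ℕ) (q : Fin t → ℕ)
    (hq : ∀ k, (q k).Prime) (hinj : Function.Injective q)
    (η : Fin t → ℕ) (hη : ∀ k, 2 ≤ η k) :
    LinearIndependent ℚ
      (fun ε : (k : Fin t) → Fin (η k) =>
        ∏ k, (q k : ℝ) ^ ((ε k : ℝ) / (η k : ℝ))) ∧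
    Submodule.span ℚ
        (Set.range fun ε : (k : Fin t) → Fin (η k) =>
          ∏ k, (q k : ℝ) ^ ((ε k : ℝ) / (η k : ℝ))) =
      Subalgebra.toSubmodule
        (IntermediateField.adjoin ℚ
          (Set.range fun k : Fin t => (q k : ℝ) ^ ((1 : ℝ) / (η k : ℝ)))).toSubalgebra := by
  have hη0 : ∀ k, η k ≠ 0 := fun k ↦ Nat.ne_zero_of_lt (hη k)
  have hq0 : ∀ k, (0 : ℝ) ≤ q k := fun k ↦ Nat.cast_nonneg _
  have hroot : ∀ k, ((q k : ℝ) ^ ((1 : ℝ) / η k)) ^ η k = algebraMap ℚ ℝ (q k) := fun k ↦ by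
    rw [one_div, Real.rpow_inv_natCast_pow (hq0 k) (hη0 k), map_natCast]
  have hmonomial : ∀ ε : (k : Fin t) → Fin (η k), ∏ k, (q k : ℝ) ^ ((ε k : ℝ) / η k) =
      ∏ k, ((q k : ℝ) ^ ((1 : ℝ) / η k)) ^ (ε k : ℕ) := fun ε ↦
    Finset.prod_congr rfl fun k _ ↦ by rw [← Real.rpow_mul_natCast (hq0 k), one_div_mul_eq_div]
  have hpos : ∀ ε : (k : Fin t) → Fin (η k), 0 < ∏ k, (q k : ℝ) ^ ((ε k : ℝ) / η k) :=
    fun ε ↦ Finset.prod_pos fun k _ ↦ Real.rpow_pos_of_pos (Nat.cast_pos.mpr (hq k).pos) _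
  refine ⟨linearIndependent_of_pow_eq_rat_of_div_ne_rat hpos (fun ε ↦ ?_)
    fun ε ε' hne r hr ↦ hne ?_, ?_⟩
  · exact ⟨_, Finset.prod_pos fun k _ ↦ Nat.pos_of_ne_zero (hη0 k), _,
      prod_rpow_div_pow_prod hη0 fun k ↦ ε k⟩
  · exact eq_of_prod_rpow_div_eq_rat_mul hq hinj hη0 ((div_eq_iff (hpos ε').ne').mp hr)
  · simp_rw [hmonomial]
    rw [adjoin_toSubalgebra_of_isAlgebraic, span_range_prod_pow_eq_adjoin hη0 hroot]
    rintro _ ⟨k, rfl⟩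
    exact (IsIntegral.of_pow (Nat.pos_of_ne_zero (hη0 k))
      (hroot k ▸ isIntegral_algebraMap)).isAlgebraic
end

section
/- Let b₁^(1/m₁), …, b_k^(1/m_k) be positive reals with b_i ∈ ℚ⁺, m_i ≥ 2, such that for every tuple (ε₁, …, ε_k) with 0 ≤ ε_i ≤ m_i − 1 not all zero, the product ∏ b_i^(ε_i/m_i) is irrational (a 'reduced set'). Then the numbers {∏_{i=1}^k b_i^(ε_i/m_i) : 0 ≤ ε_i ≤ m_i − 1} are linearly independent over ℚ. -/
/-!
Put `N = ∏ mᵢ` and `x_ε = ∏ bᵢ^(εᵢ/mᵢ)`. Each `x_ε` is a positive real with `x_ε ^ N ∈ ℚ`, so all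
its complex conjugates have absolute value `x_ε`; the constant coefficient of its minimal
polynomial then shows that this polynomial is `X ^ r - s`, with `r ≥ 2` when `x_ε` is irrational.
Hence every `x_ε` with `ε ≠ 0` has trace zero in the number field `K = ℚ(x_ε : ε)`.
The `x_ε` are graded by the group `∏ ℤ/mᵢ`: `x_ε x_η ∈ ℚ^× x_{ε+η}`. Multiplying a relation
`∑ q_ε x_ε = 0` by `x_{-ε₀}` and taking the trace leaves only the term that lands on `x_0 = 1`,
namely a nonzero rational multiple of `q_{ε₀} [K : ℚ]`.
-/

open Polynomial

theorem isIntegral_of_pow_eq_ratCast {x : ℝ} {n : ℕ} (hn : n ≠ 0) {q : ℚ} (hq : x ^ n = q) :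
    IsIntegral ℚ x :=
  .of_pow (Nat.pos_of_ne_zero hn) (hq ▸ isIntegral_algebraMap (x := q))

theorem exists_ratCast_eq_pow_natDegree_minpoly {x : ℝ} (hx : 0 < x) {n : ℕ} (hn : n ≠ 0)
    {q : ℚ} (hq : x ^ n = q) : ∃ s : ℚ, x ^ (minpoly ℚ x).natDegree = s := by
  have hroot : aeval x (X ^ n - C q) = 0 := by simp [hq]
  have hint := isIntegral_of_pow_eq_ratCast hn hq
  set P := (minpoly ℚ x).map (algebraMap ℚ ℂ)
  have hsplit : P.Splits := IsAlgClosed.splits P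
  have hnorm_root : ∀ z ∈ P.roots, ‖z‖ = x := by
    intro z hz
    have hzq : z ^ n = q := by
      have hdvd := map_dvd (algebraMap ℚ ℂ) (minpoly.dvd ℚ x hroot)
      simpa [sub_eq_zero] using
        eval_eq_zero_of_dvd_of_eval_eq_zero hdvd (isRoot_of_mem_roots hz)
    refine (pow_left_inj₀ (norm_nonneg z) hx.le hn).mp ?_
    rw [← norm_pow, hzq, Complex.norm_ratCast, ← hq, abs_of_pos (pow_pos hx n)]
  have hcoeff : ‖P.coeff 0‖ = x ^ (minpoly ℚ x).natDegree := by
    rw [hsplit.coeff_zero_eq_prod_roots_of_monic ((minpoly.monic hint).map _), norm_mul,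
      norm_pow, norm_neg, norm_one, one_pow, one_mul, ← natDegree_map (algebraMap ℚ ℂ),
      hsplit.natDegree_eq_card_roots, ← Multiset.prod_replicate, ← Multiset.map_const',
      ← Multiset.map_congr rfl hnorm_root]
    exact map_multiset_prod (normHom : ℂ →*₀ ℝ) _
  refine ⟨|(minpoly ℚ x).coeff 0|, ?_⟩
  rw [← hcoeff, coeff_map, eq_ratCast, Complex.norm_ratCast, Rat.cast_abs]

theorem minpoly_eq_X_pow_sub_C_of_pow_eq_ratCast {x : ℝ} (hx : 0 < x) {n : ℕ} (hn : n ≠ 0)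
    {q : ℚ} (hq : x ^ n = q) : ∃ s : ℚ, minpoly ℚ x = X ^ (minpoly ℚ x).natDegree - C s := by
  have hint := isIntegral_of_pow_eq_ratCast hn hq
  obtain ⟨s, hs⟩ := exists_ratCast_eq_pow_natDegree_minpoly hx hn hq
  have hdvd : minpoly ℚ x ∣ X ^ (minpoly ℚ x).natDegree - C s :=
    minpoly.dvd ℚ x (by rw [map_sub, map_pow, aeval_X, aeval_C, hs, eq_ratCast, sub_self])
  exact ⟨s, (eq_of_monic_of_dvd_of_natDegree_le (minpoly.monic hint)
    (monic_X_pow_sub_C s (minpoly.natDegree_pos hint).ne') hdvd natDegree_X_pow_sub_C.le).symm⟩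

theorem nextCoeff_minpoly_eq_zero_of_pow_eq_ratCast {x : ℝ} (hx : 0 < x) (hirr : Irrational x)
    {n : ℕ} (hn : n ≠ 0) {q : ℚ} (hq : x ^ n = q) : (minpoly ℚ x).nextCoeff = 0 := by
  have hint := isIntegral_of_pow_eq_ratCast hn hq
  have hdeg : 2 ≤ (minpoly ℚ x).natDegree := (minpoly.two_le_natDegree_iff hint).mpr hirr
  obtain ⟨s, hs⟩ := minpoly_eq_X_pow_sub_C_of_pow_eq_ratCast hx hn hq
  have hne : (minpoly ℚ x).natDegree - 1 ≠ (minpoly ℚ x).natDegree ∧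
      (minpoly ℚ x).natDegree - 1 ≠ 0 := by omega
  rw [nextCoeff_of_natDegree_pos (by omega), hs]
  simp [coeff_X_pow, coeff_C, hne]

theorem Algebra.trace_eq_zero_of_pow_eq_ratCast {K : Type*} [Field K] [Algebra ℚ K]
    [FiniteDimensional ℚ K] (f : K →ₐ[ℚ] ℝ) {y : K} (hy : 0 < f y) (hirr : Irrational (f y))
    {n : ℕ} (hn : n ≠ 0) {q : ℚ} (hq : f y ^ n = q) : Algebra.trace ℚ K y = 0 := by
  rw [trace_eq_finrank_mul_minpoly_nextCoeff, ← minpoly.algHom_eq f f.injective,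
    nextCoeff_minpoly_eq_zero_of_pow_eq_ratCast hy hirr hn hq, neg_zero, mul_zero]

theorem linearIndependent_of_mul_eq_smul_of_trace_eq_zero {F K G : Type*} [Field F]
    [CharZero F] [CommRing K] [Nontrivial K] [Algebra F K] [FiniteDimensional F K] [AddGroup G]
    (v : G → K) (hv₀ : v 0 = 1) (hmul : ∀ g h, ∃ c : F, c ≠ 0 ∧ v g * v h = c • v (g + h))
    (htrace : ∀ g ≠ 0, Algebra.trace F K (v g) = 0) : LinearIndependent F v := by
  classical
  rw [linearIndependent_iff']
  intro s a hsum g₀ hg₀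
  choose c hc0 hc using fun g => hmul g (-g₀)
  have hshift : ∑ g ∈ s, (a g * c g) • v (g + -g₀) = 0 := by
    simp_rw [mul_smul, ← hc, ← smul_mul_assoc, ← Finset.sum_mul, hsum, zero_mul]
  have htr := congrArg (Algebra.trace F K) hshift
  rw [map_sum, map_zero, Finset.sum_eq_single_of_mem g₀ hg₀] at htr
  · rw [add_neg_cancel, hv₀, Algebra.smul_def, mul_one, Algebra.trace_algebraMap] at htr
    simpa [hc0 g₀, Module.finrank_pos.ne'] using htr
  · intro g _ hg
    rw [map_smul, htrace _ (by rwa [Ne, add_neg_eq_zero]), smul_zero]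

theorem Real.rpow_natCast_div_mul_rpow_natCast_div {b : ℝ} (hb : 0 < b) (c d n : ℕ) :
    b ^ ((c : ℝ) / n) * b ^ ((d : ℝ) / n) =
      b ^ ((c + d) / n) * b ^ ((((c + d) % n : ℕ) : ℝ) / n) := by
  rw [← Real.rpow_add hb, ← Real.rpow_natCast, ← Real.rpow_add hb]
  congr 1
  rcases eq_or_ne n 0 with rfl | hn
  · simp
  have hdiv : ((c + d : ℕ) : ℝ) = n * ((c + d) / n : ℕ) + ((c + d) % n : ℕ) := by
    exact_mod_cast (Nat.div_add_mod (c + d) n).symm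
  push_cast at hdiv
  field_simp
  linarith

theorem Real.rpow_natCast_div_pow_of_dvd {b : ℝ} (hb : 0 ≤ b) (e : ℕ) {m N : ℕ} (hmN : m ∣ N) :
    (b ^ ((e : ℝ) / m)) ^ N = b ^ (e * (N / m)) := by
  rcases eq_or_ne m 0 with rfl | hm
  · simp [Nat.eq_zero_of_zero_dvd hmN]
  obtain ⟨t, rfl⟩ := hmN
  rw [← Real.rpow_natCast, ← Real.rpow_mul hb, ← Real.rpow_natCast,
    Nat.mul_div_cancel_left t (Nat.pos_of_ne_zero hm)]
  push_cast
  field_simp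

noncomputable def radicalMonomial {ι : Type*} [Fintype ι] (b : ι → ℚ) (m : ι → ℕ)
    (ε : (i : ι) → Fin (m i)) : ℝ :=
  ∏ i, (b i : ℝ) ^ ((ε i : ℝ) / (m i : ℝ))

section radicalMonomial

variable {ι : Type*} [Fintype ι] {b : ι → ℚ} {m : ι → ℕ}

theorem radicalMonomial_pos (hb : ∀ i, 0 < b i) (ε : (i : ι) → Fin (m i)) :
    0 < radicalMonomial b m ε :=
  Finset.prod_pos fun i _ => Real.rpow_pos_of_pos (Rat.cast_pos.mpr (hb i)) _

theorem radicalMonomial_zero [∀ i, NeZero (m i)] : radicalMonomial b m 0 = 1 := by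
  simp [radicalMonomial]

theorem exists_radicalMonomial_mul_eq (hb : ∀ i, 0 < b i) (ε η : (i : ι) → Fin (m i)) :
    ∃ c : ℚ, 0 < c ∧
      radicalMonomial b m ε * radicalMonomial b m η = c * radicalMonomial b m (ε + η) := by
  refine ⟨∏ i, b i ^ ((ε i + η i : ℕ) / m i), Finset.prod_pos fun i _ => pow_pos (hb i) _, ?_⟩
  simp only [radicalMonomial, ← Finset.prod_mul_distrib, Rat.cast_prod, Rat.cast_pow]
  refine Finset.prod_congr rfl fun i _ => ?_
  rw [Real.rpow_natCast_div_mul_rpow_natCast_div (Rat.cast_pos.mpr (hb i)), Pi.add_apply,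
    Fin.val_add]

theorem exists_radicalMonomial_pow_eq_ratCast (hb : ∀ i, 0 < b i) (ε : (i : ι) → Fin (m i)) :
    ∃ q : ℚ, radicalMonomial b m ε ^ (∏ i, m i) = q := by
  refine ⟨∏ i, b i ^ ((ε i : ℕ) * ((∏ j, m j) / m i)), ?_⟩
  simp only [radicalMonomial, ← Finset.prod_pow, Rat.cast_prod, Rat.cast_pow]
  exact Finset.prod_congr rfl fun i _ => Real.rpow_natCast_div_pow_of_dvd
    (Rat.cast_pos.mpr (hb i)).le _ (Finset.dvd_prod_of_mem m (Finset.mem_univ i))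

end radicalMonomial

theorem reduced_set_products_linearIndependent (k : ℕ) (b : Fin k → ℚ) (m : Fin k → ℕ)
    (hb : ∀ i, 0 < b i) (hm : ∀ i, 2 ≤ m i)
    (hred : ∀ ε : (i : Fin k) → Fin (m i), (¬ ∀ i, (ε i : ℕ) = 0) →
      Irrational (∏ i, (b i : ℝ) ^ ((ε i : ℝ) / (m i : ℝ)))) :
    LinearIndependent ℚ
      (fun ε : (i : Fin k) → Fin (m i) =>
        ∏ i, (b i : ℝ) ^ ((ε i : ℝ) / (m i : ℝ))) := by
  have : ∀ i, NeZero (m i) := fun i => ⟨by linarith [hm i]⟩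
  have hN : ∏ i, m i ≠ 0 := Finset.prod_ne_zero_iff.mpr fun i _ => NeZero.ne (m i)
  let K := IntermediateField.adjoin ℚ (Set.range (radicalMonomial b m))
  have : FiniteDimensional ℚ K := IntermediateField.finiteDimensional_adjoin <| by
    rintro _ ⟨ε, rfl⟩
    obtain ⟨q, hq⟩ := exists_radicalMonomial_pow_eq_ratCast hb ε
    exact isIntegral_of_pow_eq_ratCast hN hq
  let v : ((i : Fin k) → Fin (m i)) → K := fun ε =>
    ⟨radicalMonomial b m ε, IntermediateField.subset_adjoin ℚ _ ⟨ε, rfl⟩⟩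
  have hv : LinearIndependent ℚ v := by
    refine linearIndependent_of_mul_eq_smul_of_trace_eq_zero v
      (Subtype.ext (radicalMonomial_zero (b := b))) (fun ε η => ?_) (fun ε hε => ?_)
    · obtain ⟨c, hc, hmul⟩ := exists_radicalMonomial_mul_eq hb ε η
      exact ⟨c, hc.ne', Subtype.ext (by simpa [Rat.smul_def] using hmul)⟩
    · obtain ⟨q, hq⟩ := exists_radicalMonomial_pow_eq_ratCast hb ε
      exact Algebra.trace_eq_zero_of_pow_eq_ratCast K.val (radicalMonomial_pos hb ε)
        (hred ε fun h => hε (funext fun i => Fin.ext (h i))) hN hq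
  exact hv.map' K.val.toLinearMap (LinearMap.ker_eq_bot.mpr K.val.injective)
end

section
/- If b₁, …, b_n are positive rationals and m₁, …, m_n ≥ 2 are integers such that each b_i^(1/m_i) is irrational, and r₁, …, r_n are nonzero rationals, then there exist distinct primes q₁, …, q_t and integers η₁, …, η_t ≥ 2 such that ∑ r_i b_i^(1/m_i) ∈ ℚ(q₁^(1/η₁), …, q_t^(1/η_t)), where the roots q_k^(1/η_k) form a reduced set. -/
private lemma aux_nat_prod {N : ℕ} (hN : N ≠ 0) {s : Finset ℕ}
    (hs : N.primeFactors ⊆ s) : ∏ p ∈ s, p ^ N.factorization p = N := by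
  conv_rhs => rw [← Nat.factorization_prod_pow_eq_self hN]
  rw [Finsupp.prod]
  refine (Finset.prod_subset (by rwa [Nat.support_factorization]) ?_).symm
  intro p _ hp
  simp [Finsupp.notMem_support_iff.mp hp]

private lemma aux_rat_prod (b : ℚ) (hb : 0 < b) {s : Finset ℕ}
    (hsp : ∀ p ∈ s, p ≠ 0)
    (hs : (b.num.natAbs * b.den).primeFactors ⊆ s) :
    (b : ℝ) = ∏ p ∈ s,
      (p : ℝ) ^ ((b.num.natAbs.factorization p : ℤ) - (b.den.factorization p : ℤ)) := by
  have hnum : (0 : ℤ) < b.num := Rat.num_pos.mpr hb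
  have hnA : b.num.natAbs ≠ 0 := Int.natAbs_ne_zero.mpr hnum.ne'
  have hden : b.den ≠ 0 := b.den_nz
  have hsub : b.num.natAbs.primeFactors ∪ b.den.primeFactors ⊆ s := by
    rwa [← Nat.primeFactors_mul hnA hden]
  have hs1 : b.num.natAbs.primeFactors ⊆ s :=
    fun p hp => hsub (Finset.mem_union_left _ hp)
  have hs2 : b.den.primeFactors ⊆ s :=
    fun p hp => hsub (Finset.mem_union_right _ hp)
  have hne : ∀ p ∈ s, (p : ℝ) ≠ 0 := fun p hp => Nat.cast_ne_zero.mpr (hsp p hp)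
  have h1 : ∏ p ∈ s, (p : ℝ) ^ ((b.num.natAbs.factorization p : ℤ)) = (b.num.natAbs : ℝ) := by
    simp only [zpow_natCast]
    exact_mod_cast congrArg (fun k : ℕ => (k : ℝ)) (aux_nat_prod hnA hs1)
  have h2 : ∏ p ∈ s, (p : ℝ) ^ ((b.den.factorization p : ℤ)) = (b.den : ℝ) := by
    simp only [zpow_natCast]
    exact_mod_cast congrArg (fun k : ℕ => (k : ℝ)) (aux_nat_prod hden hs2)
  rw [Finset.prod_congr rfl (fun p hp => zpow_sub₀ (hne p hp) _ _),
    Finset.prod_div_distrib, h1, h2, Rat.cast_def]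
  congr 1
  conv_lhs => rw [← Int.natAbs_of_nonneg hnum.le]
  exact Int.cast_natCast _

theorem sum_mem_adjoin_reduced_set (n : ℕ) (b : Fin n → ℚ) (m : Fin n → ℕ) (r : Fin n → ℚ)
    (hb : ∀ i, 0 < b i) (hm : ∀ i, 2 ≤ m i)
    (hirr : ∀ i, Irrational ((b i : ℝ) ^ ((1 : ℝ) / (m i : ℝ))))
    (hr : ∀ i, r i ≠ 0) :
    ∃ (t : ℕ) (q : Fin t → ℕ) (η : Fin t → ℕ),
      (∀ k, (q k).Prime) ∧ Function.Injective q ∧ (∀ k, 2 ≤ η k) ∧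
      (∑ i, (r i : ℝ) * (b i : ℝ) ^ ((1 : ℝ) / (m i : ℝ))) ∈
        IntermediateField.adjoin ℚ
          (Set.range fun k : Fin t => (q k : ℝ) ^ ((1 : ℝ) / (η k : ℝ))) ∧
      (∀ ε : Fin t → ℕ, (∀ k, ε k ≤ η k - 1) → (¬ ∀ k, ε k = 0) →
        Irrational (∏ k, (q k : ℝ) ^ ((ε k : ℝ) / (η k : ℝ)))) := by
  -- the common exponent denominator
  set M : ℕ := 2 * ∏ i, m i with hMdef
  have hM2 : 2 ≤ M := by
    have : 0 < ∏ i, m i := Finset.prod_pos fun i _ => by have := hm i; omega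
    calc 2 = 2 * 1 := by ring
    _ ≤ 2 * ∏ i, m i := by exact Nat.mul_le_mul_left 2 this
  have hMdvd : ∀ i, m i ∣ M := fun i =>
    dvd_mul_of_dvd_right (Finset.dvd_prod_of_mem m (Finset.mem_univ i)) 2
  have hM0 : (M : ℝ) ≠ 0 := by positivity
  -- the primes
  set D : ℕ := ∏ i, (b i).num.natAbs * (b i).den with hDdef
  have hD : D ≠ 0 := by
    refine Finset.prod_ne_zero_iff.mpr fun i _ => mul_ne_zero ?_ (b i).den_nz
    exact Int.natAbs_ne_zero.mpr (Rat.num_pos.mpr (hb i)).ne'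
  set primes : Finset ℕ := D.primeFactors with hprimesdef
  have hprime : ∀ p ∈ primes, p.Prime := fun p hp => Nat.prime_of_mem_primeFactors hp
  set t := primes.card with htdef
  set iso := primes.orderIsoOfFin rfl with hisodef
  refine ⟨t, fun k => (iso k : ℕ), fun _ => M, fun k => hprime _ (iso k).2,
    fun a c h => iso.injective (Subtype.ext h), fun _ => hM2, ?_, ?_⟩
  · -- membership
    set K := IntermediateField.adjoin ℚ
      (Set.range fun k : Fin t => ((iso k : ℕ) : ℝ) ^ ((1 : ℝ) / (M : ℝ))) with hK
    have gen_mem : ∀ p ∈ primes, ((p : ℝ) ^ ((1 : ℝ) / (M : ℝ))) ∈ K := by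
      intro p hp
      apply IntermediateField.subset_adjoin
      exact ⟨iso.symm ⟨p, hp⟩, by simp⟩
    refine sum_mem fun i _ => mul_mem (SubfieldClass.ratCast_mem K (r i)) ?_
    have hm0 : (m i : ℝ) ≠ 0 := by
      have := hm i; positivity
    have hsubp : ((b i).num.natAbs * (b i).den).primeFactors ⊆ primes :=
      Nat.primeFactors_mono (Finset.dvd_prod_of_mem _ (Finset.mem_univ i)) hD
    have key : (b i : ℝ) ^ ((1 : ℝ) / (m i : ℝ)) =
        ∏ p ∈ primes, ((p : ℝ) ^ ((1 : ℝ) / (M : ℝ))) ^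
          ((((b i).num.natAbs.factorization p : ℤ) - ((b i).den.factorization p : ℤ))
            * ((M / m i : ℕ) : ℤ)) := by
      rw [aux_rat_prod (b i) (hb i) (fun p hp => (hprime p hp).ne_zero) hsubp]
      rw [← Real.finset_prod_rpow primes _
        (fun p _ => zpow_nonneg (Nat.cast_nonneg p) _) _]
      refine Finset.prod_congr rfl fun p hp => ?_
      have hp0 : (0 : ℝ) ≤ (p : ℝ) := Nat.cast_nonneg p
      rw [← Real.rpow_intCast (p : ℝ), ← Real.rpow_mul hp0,
        ← Real.rpow_intCast ((p : ℝ) ^ ((1 : ℝ) / (M : ℝ))), ← Real.rpow_mul hp0]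
      congr 1
      have hcd : ((M / m i : ℕ) : ℝ) = (M : ℝ) / (m i : ℝ) :=
        Nat.cast_div (hMdvd i) hm0
      rw [Int.cast_mul, Int.cast_natCast, hcd]
      field_simp
    rw [key]
    exact prod_mem fun p hp => zpow_mem (gen_mem p hp) _
  · -- irrationality of nontrivial products
    intro ε hε hne0
    push_neg at hne0
    obtain ⟨k₀, hk₀⟩ := hne0
    have hεlt : ∀ k, ε k < M := fun k => by
      have h := hε k; dsimp only at h; omega
    set N : ℕ := ∏ k, (iso k : ℕ) ^ ε k with hN
    have hqpos : ∀ k : Fin t, 0 < ((iso k : ℕ) : ℝ) := fun k =>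
      Nat.cast_pos.mpr (hprime _ (iso k).2).pos
    set x : ℝ := ∏ k, ((iso k : ℕ) : ℝ) ^ ((ε k : ℝ) / (M : ℝ)) with hx
    have hxpos : 0 < x := Finset.prod_pos fun k _ => Real.rpow_pos_of_pos (hqpos k) _
    have hxM : x ^ M = (N : ℝ) := by
      rw [hx, ← Finset.prod_pow]
      rw [hN]
      push_cast
      refine Finset.prod_congr rfl fun k _ => ?_
      rw [← Real.rpow_natCast (((iso k : ℕ) : ℝ) ^ ((ε k : ℝ) / (M : ℝ))) M,
        ← Real.rpow_mul (hqpos k).le, div_mul_cancel₀ _ hM0, Real.rpow_natCast]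
    have hnotint : ¬∃ y : ℤ, x = (y : ℝ) := by
      rintro ⟨y, hy⟩
      have hy0 : 0 < y := by exact_mod_cast hy ▸ hxpos
      set Y : ℕ := y.toNat with hY
      have hYx : (Y : ℝ) = x := by rw [hy]; exact_mod_cast congrArg Int.cast (Int.toNat_of_nonneg hy0.le)
      have hYN : Y ^ M = N := by
        have : ((Y ^ M : ℕ) : ℝ) = (N : ℝ) := by push_cast; rw [hYx]; exact hxM
        exact_mod_cast this
      have hNfac : N.factorization ((iso k₀ : ℕ)) = ε k₀ := by
        rw [hN, Nat.factorization_prod (fun k _ => pow_ne_zero _ (hprime _ (iso k).2).ne_zero)]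
        rw [Finsupp.finset_sum_apply]
        rw [Finset.sum_eq_single k₀]
        · simp [Nat.factorization_pow, (hprime _ (iso k₀).2).factorization]
        · intro k _ hk
          have hqk : (iso k : ℕ) ≠ (iso k₀ : ℕ) := fun h =>
            hk (iso.injective (Subtype.ext h))
          simp [Nat.factorization_pow, (hprime _ (iso k).2).factorization,
            Finsupp.single_apply, hqk]
        · simp
      have hYfac : (Y ^ M).factorization ((iso k₀ : ℕ)) =
          M * Y.factorization ((iso k₀ : ℕ)) := by
        rw [Nat.factorization_pow]; simp
      rw [hYN, hNfac] at hYfac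
      rcases Nat.eq_zero_or_pos (Y.factorization ((iso k₀ : ℕ))) with h0 | h1
      · rw [h0] at hYfac; omega
      · have : M ≤ ε k₀ := by
          calc M = M * 1 := by ring
          _ ≤ M * Y.factorization ((iso k₀ : ℕ)) := Nat.mul_le_mul_left M h1
          _ = ε k₀ := hYfac.symm
        have := hεlt k₀; omega
    have : Irrational x :=
      irrational_nrt_of_notint_nrt M (N : ℤ) (by rw [hxM]; push_cast; ring) hnotint (by omega)
    exact this
end
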